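/- Let t > 0, s > 0, I_L > 0, and define π_F(I_F) = (tπ^2/(36 I_L^2) − 2s) I_F^2 + (5tπ^2/(18 I_L)) I_F + 25tπ^2/36 on [0, I_L]. Then π_F attains its maximum at I_F* = 5tπ^2 I_L/(72 I_L^2 s − tπ^2) if I_L ≥ (π/2)√(t/(3s)), and at I_F* = I_L if 0 < I_L < (π/2)√(t/(3s)). -/

import Mathlib

/-!
The threshold `IL ≥ (π/2)√(t/(3s))` is `tπ² ≤ 12 s IL²`. Above it the leading coefficient of
`π_F` is negative and the vertex `-b/(2a)` is the stated point; below it the slope `2a IL + b`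
of `π_F` at `IL` is `(tπ² - 12 s IL²)/(3 IL) > 0`, and with `b > 0` the quadratic increases on
`[0, IL]`.
-/

open Set Real

section Quadratic

variable {K : Type*} [Field K] [LinearOrder K] [IsStrictOrderedRing K] {a b c : K}

/-- Completing the square: `a x² + b x + c = a (x - v)² + (a v² + b v + c)` with `v = -b / (2a)`. -/
theorem isMaxOn_quadratic_vertex (ha : a < 0) :
    IsMaxOn (fun x => a * x ^ 2 + b * x + c) univ (-b / (2 * a)) := by
  intro x _
  set v := -b / (2 * a)
  have hb : b = -2 * a * v := by
    linear_combination (div_mul_cancel₀ (-b) (mul_neg_of_pos_of_neg two_pos ha).ne)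
  have hsq : a * (x - v) ^ 2 ≤ 0 := mul_nonpos_of_nonpos_of_nonneg ha.le (sq_nonneg _)
  show a * x ^ 2 + b * x + c ≤ a * v ^ 2 + b * v + c
  rw [hb]
  linarith

/-- `q L - q y = (L - y) (a (L + y) + b)`, whose second factor is affine in `y` and nonnegative
at `y = 0` and `y = L`. -/
theorem isMaxOn_quadratic_Icc_right {L : K} (hb : 0 ≤ b) (hL : 0 ≤ 2 * a * L + b) :
    IsMaxOn (fun x => a * x ^ 2 + b * x + c) (Icc 0 L) L := by
  rintro y ⟨hy0, hyL⟩
  have hslope : 0 ≤ a * (L + y) + b := by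
    rcases le_total 0 a with ha | ha
    · nlinarith
    · nlinarith
  show a * y ^ 2 + b * y + c ≤ a * L ^ 2 + b * L + c
  nlinarith [mul_nonneg (sub_nonneg.2 hyL) hslope]

end Quadratic

theorem mul_sqrt_div_le_iff {x y k L : ℝ} (hx : 0 ≤ x) (hk : 0 < k) (hL : 0 ≤ L) :
    x * √(y / k) ≤ L ↔ x ^ 2 * y ≤ k * L ^ 2 := by
  conv_lhs => rw [← Real.sqrt_sq hx, ← Real.sqrt_mul (sq_nonneg x)]
  rw [Real.sqrt_le_left hL, ← mul_div_assoc, div_le_iff₀ hk, mul_comm (L ^ 2)]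

theorem stmt15 (t s IL : ℝ) (ht : 0 < t) (hs : 0 < s) (hIL : 0 < IL)
    (πF : ℝ → ℝ)
    (hπ : ∀ x, πF x = (t * π ^ 2 / (36 * IL ^ 2) - 2 * s) * x ^ 2
        + (5 * t * π ^ 2 / (18 * IL)) * x + 25 * t * π ^ 2 / 36) :
    (IL ≥ (π / 2) * Real.sqrt (t / (3 * s)) →
      IsMaxOn πF (Icc 0 IL) (5 * t * π ^ 2 * IL / (72 * IL ^ 2 * s - t * π ^ 2))) ∧
    (IL < (π / 2) * Real.sqrt (t / (3 * s)) → IsMaxOn πF (Icc 0 IL) IL) := by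
  obtain rfl : πF = fun x => (t * π ^ 2 / (36 * IL ^ 2) - 2 * s) * x ^ 2
      + (5 * t * π ^ 2 / (18 * IL)) * x + 25 * t * π ^ 2 / 36 := funext hπ
  have hthreshold := mul_sqrt_div_le_iff (y := t) (half_pos pi_pos).le (by positivity : 0 < 3 * s)
    hIL.le
  have htπ : 0 < t * π ^ 2 := by positivity
  constructor
  · intro h
    have hle : t * π ^ 2 ≤ 12 * s * IL ^ 2 := by linarith [hthreshold.1 h]
    have hA : t * π ^ 2 / (36 * IL ^ 2) - 2 * s < 0 := by
      rw [sub_neg, div_lt_iff₀ (by positivity)]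
      nlinarith [pow_pos hIL 2]
    have hD : 72 * IL ^ 2 * s - t * π ^ 2 ≠ 0 := by nlinarith [pow_pos hIL 2]
    have hvertex : -(5 * t * π ^ 2 / (18 * IL)) / (2 * (t * π ^ 2 / (36 * IL ^ 2) - 2 * s))
        = 5 * t * π ^ 2 * IL / (72 * IL ^ 2 * s - t * π ^ 2) := by
      rw [div_eq_div_iff (mul_neg_of_pos_of_neg two_pos hA).ne hD]
      field_simp
      ring
    rw [← hvertex]
    exact (isMaxOn_quadratic_vertex hA).on_subset (subset_univ _)
  · intro h
    have hlt : 12 * s * IL ^ 2 < t * π ^ 2 := by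
      linarith [hthreshold.not.1 (not_le.2 h)]
    refine isMaxOn_quadratic_Icc_right (by positivity) ?_
    have hslope : 2 * (t * π ^ 2 / (36 * IL ^ 2) - 2 * s) * IL + 5 * t * π ^ 2 / (18 * IL)
        = (t * π ^ 2 - 12 * s * IL ^ 2) / (3 * IL) := by
      field_simp
      ring
    rw [hslope]
    exact div_nonneg (by linarith) (by positivity)
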